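/- Let d₁ and d₂ be odd integers with d₁, d₂ ≥ 3, and let ρ₁ and ρ₂ be density matrices on ℂ^{d₁} and ℂ^{d₂} respectively. Then the discrete Wigner function of the tensor (Kronecker) product factorizes: W_{(p₁,p₂)(q₁,q₂)}(ρ₁ ⊗ ρ₂) = W_{p₁q₁}(ρ₁) · W_{p₂q₂}(ρ₂) for all p₁, q₁ ∈ ℤ_{d₁} and p₂, q₂ ∈ ℤ_{d₂}. Consequently ‖ρ₁ ⊗ ρ₂‖_W = ‖ρ₁‖_W · ‖ρ₂‖_W, so the mana is additive: M(ρ₁ ⊗ ρ₂) = M(ρ₁) + M(ρ₂). -/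

import Mathlib

open Matrix BigOperators ComplexOrder

noncomputable section

/-- The primitive `d`-th root of unity `ω = exp(2πi/d)`. -/
def omega (d : ℕ) : ℂ := Complex.exp (2 * Real.pi * Complex.I / d)

/-- The clock operator `Z = Σ_m ω^m |m⟩⟨m|`. -/
def clockOp (d : ℕ) [NeZero d] : Matrix (ZMod d) (ZMod d) ℂ :=
  Matrix.diagonal fun m => omega d ^ m.val

/-- The shift operator `X = Σ_m |m+1 mod d⟩⟨m|`. -/
def shiftOp (d : ℕ) [NeZero d] : Matrix (ZMod d) (ZMod d) ℂ :=
  Matrix.of fun i j => if i = j + 1 then 1 else 0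

/-- The generalized Pauli operator `T_{pq} = ω^{((d+1)/2)·pq} Z^p X^q`. -/
def genPauli (d : ℕ) [NeZero d] (p q : ZMod d) : Matrix (ZMod d) (ZMod d) ℂ :=
  (omega d ^ (((d + 1) / 2) * p.val * q.val)) • (clockOp d ^ p.val * shiftOp d ^ q.val)

/-- The discrete Wigner function
`W_{pq}(ρ) = d⁻¹ Σ_{p',q'} ω^{pq' − p'q} Tr(ρ T_{p'q'})`. -/
def wigner (d : ℕ) [NeZero d] (ρ : Matrix (ZMod d) (ZMod d) ℂ) (p q : ZMod d) : ℂ :=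
  (d : ℂ)⁻¹ * ∑ p' : ZMod d, ∑ q' : ZMod d,
    omega d ^ ((p.val * q'.val : ℤ) - (p'.val * q.val : ℤ)) * (ρ * genPauli d p' q').trace

/-- The Wigner norm `‖ρ‖_W = Σ_{pq} |W_{pq}(ρ)|`. -/
def wignerNorm (d : ℕ) [NeZero d] (ρ : Matrix (ZMod d) (ZMod d) ℂ) : ℝ :=
  ∑ p : ZMod d, ∑ q : ZMod d, ‖wigner d ρ p q‖

/-- The trace norm of a matrix: the sum of its singular values, i.e. the sum of the
square roots of the eigenvalues of `Aᴴ A`. -/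
def traceNorm (d : ℕ) [NeZero d] (A : Matrix (ZMod d) (ZMod d) ℂ) : ℝ :=
  ∑ i, Real.sqrt ((Matrix.posSemidef_conjTranspose_mul_self A).1.eigenvalues i)

/-- A density matrix: positive semidefinite with unit trace. -/
def IsDensityMatrix (d : ℕ) [NeZero d] (ρ : Matrix (ZMod d) (ZMod d) ℂ) : Prop :=
  ρ.PosSemidef ∧ ρ.trace = 1

open Kronecker

/-- The discrete Wigner function of a state on the composite system `ℂ^{d₁} ⊗ ℂ^{d₂}`. -/
def wigner2 (d₁ d₂ : ℕ) [NeZero d₁] [NeZero d₂]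
    (ρ : Matrix (ZMod d₁ × ZMod d₂) (ZMod d₁ × ZMod d₂) ℂ)
    (p₁ : ZMod d₁) (p₂ : ZMod d₂) (q₁ : ZMod d₁) (q₂ : ZMod d₂) : ℂ :=
  ((d₁ : ℂ) * (d₂ : ℂ))⁻¹ * ∑ p₁' : ZMod d₁, ∑ q₁' : ZMod d₁, ∑ p₂' : ZMod d₂, ∑ q₂' : ZMod d₂,
    omega d₁ ^ ((p₁.val * q₁'.val : ℤ) - (p₁'.val * q₁.val : ℤ)) *
      omega d₂ ^ ((p₂.val * q₂'.val : ℤ) - (p₂'.val * q₂.val : ℤ)) *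
      (ρ * (genPauli d₁ p₁' q₁' ⊗ₖ genPauli d₂ p₂' q₂')).trace

/-- The Wigner norm on the composite system. -/
def wignerNorm2 (d₁ d₂ : ℕ) [NeZero d₁] [NeZero d₂]
    (ρ : Matrix (ZMod d₁ × ZMod d₂) (ZMod d₁ × ZMod d₂) ℂ) : ℝ :=
  ∑ p₁ : ZMod d₁, ∑ p₂ : ZMod d₂, ∑ q₁ : ZMod d₁, ∑ q₂ : ZMod d₂,
    ‖wigner2 d₁ d₂ ρ p₁ p₂ q₁ q₂‖

/-!
The phase `ω^{pq' − p'q}` is the value of the additive character `a ↦ ω^{a.val}` of `ZMod d` at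
the symplectic form, and on the composite system both the phases and the Pauli operators are
products of single-system ones. Since the trace is multiplicative on Kronecker products, the
quadruple sum defining the composite Wigner function splits into the product of the two
single-system sums; the Wigner norm is then multiplicative by `|ab| = |a||b|`. For the mana one
needs the Wigner norms to be positive: orthogonality of characters gives `Σ_{pq} W_{pq}(ρ) = d·Tr ρ`,
which is nonzero for a state.
-/

lemma sum_comm_pairs {α β γ δ M : Type*} [Fintype α] [Fintype β] [Fintype γ] [Fintype δ]
    [AddCommMonoid M] (f : α → β → γ → δ → M) :
    ∑ a, ∑ b, ∑ c, ∑ e, f a b c e = ∑ c, ∑ e, ∑ a, ∑ b, f a b c e :=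
  calc ∑ a, ∑ b, ∑ c, ∑ e, f a b c e = ∑ x : α × β, ∑ y : γ × δ, f x.1 x.2 y.1 y.2 := by
        simp only [Fintype.sum_prod_type]
    _ = ∑ y : γ × δ, ∑ x : α × β, f x.1 x.2 y.1 y.2 := Finset.sum_comm
    _ = ∑ c, ∑ e, ∑ a, ∑ b, f a b c e := by simp only [Fintype.sum_prod_type]

section SinglePhaseSpace

lemma omega_ne_zero (d : ℕ) : omega d ≠ 0 := Complex.exp_ne_zero _

lemma omega_isPrimitiveRoot (d : ℕ) [NeZero d] : IsPrimitiveRoot (omega d) d :=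
  Complex.isPrimitiveRoot_exp d (NeZero.ne d)

def omegaChar (d : ℕ) [NeZero d] : AddChar (ZMod d) ℂ :=
  AddChar.zmodChar d (omega_isPrimitiveRoot d).pow_eq_one

variable {d : ℕ} [NeZero d]

lemma omegaChar_isPrimitive : (omegaChar d).IsPrimitive :=
  AddChar.zmodChar_primitive_of_primitive_root d (omega_isPrimitiveRoot d)

lemma omegaChar_mul (a b : ZMod d) : omegaChar d (a * b) = omega d ^ (a.val * b.val) := by
  rw [omegaChar, ← AddChar.zmodChar_apply' (omega_isPrimitiveRoot d).pow_eq_one, Nat.cast_mul,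
    ZMod.natCast_zmod_val, ZMod.natCast_zmod_val]

lemma omega_zpow_eq_omegaChar (p q p' q' : ZMod d) :
    omega d ^ ((p.val * q'.val : ℤ) - (p'.val * q.val : ℤ)) = omegaChar d (p * q' - p' * q) := by
  rw [AddChar.map_sub_eq_div, omegaChar_mul, omegaChar_mul, ← zpow_natCast, ← zpow_natCast,
    ← zpow_sub₀ (omega_ne_zero d)]
  push_cast
  rfl

lemma sum_sum_omegaChar (p' q' : ZMod d) :
    ∑ p : ZMod d, ∑ q : ZMod d, omegaChar d (p * q' - p' * q) =
      if p' = 0 ∧ q' = 0 then (d : ℂ) ^ 2 else 0 := by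
  have hsplit : ∀ p q : ZMod d,
      omegaChar d (p * q' - p' * q) = omegaChar d (p * q') * omegaChar d (q * -p') := by
    intro p q
    rw [← AddChar.map_add_eq_mul]
    ring_nf
  simp only [hsplit, ← Finset.mul_sum, ← Finset.sum_mul,
    AddChar.sum_mulShift _ omegaChar_isPrimitive, ZMod.card, neg_eq_zero]
  split_ifs <;> simp_all [sq]

lemma genPauli_zero_zero : genPauli d 0 0 = 1 := by
  simp [genPauli]

lemma sum_wigner (ρ : Matrix (ZMod d) (ZMod d) ℂ) :
    ∑ p : ZMod d, ∑ q : ZMod d, wigner d ρ p q = d * ρ.trace := by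
  have hd : (d : ℂ) ≠ 0 := NeZero.ne _
  calc ∑ p : ZMod d, ∑ q : ZMod d, wigner d ρ p q
      = (d : ℂ)⁻¹ * ∑ p' : ZMod d, ∑ q' : ZMod d,
          (∑ p : ZMod d, ∑ q : ZMod d, omegaChar d (p * q' - p' * q)) *
            (ρ * genPauli d p' q').trace := by
        simp only [wigner, omega_zpow_eq_omegaChar, ← Finset.mul_sum, Finset.sum_mul]
        exact congrArg ((d : ℂ)⁻¹ * ·) (sum_comm_pairs _)
    _ = (d : ℂ)⁻¹ * ((d : ℂ) ^ 2 * (ρ * genPauli d 0 0).trace) := by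
        simp [sum_sum_omegaChar, ite_and]
    _ = d * ρ.trace := by
        rw [genPauli_zero_zero, Matrix.mul_one]
        field_simp

lemma wignerNorm_pos {ρ : Matrix (ZMod d) (ZMod d) ℂ} (hρ : ρ.trace ≠ 0) :
    0 < wignerNorm d ρ :=
  calc 0 < ‖(d : ℂ) * ρ.trace‖ := norm_pos_iff.2 (mul_ne_zero (NeZero.ne _) hρ)
    _ = ‖∑ p : ZMod d, ∑ q : ZMod d, wigner d ρ p q‖ := by rw [sum_wigner]
    _ ≤ wignerNorm d ρ :=
      (norm_sum_le _ _).trans (Finset.sum_le_sum fun p _ => norm_sum_le _ _)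

end SinglePhaseSpace

section CompositePhaseSpace

variable {d₁ d₂ : ℕ} [NeZero d₁] [NeZero d₂]

lemma wigner2_kronecker (ρ₁ : Matrix (ZMod d₁) (ZMod d₁) ℂ) (ρ₂ : Matrix (ZMod d₂) (ZMod d₂) ℂ)
    (p₁ q₁ : ZMod d₁) (p₂ q₂ : ZMod d₂) :
    wigner2 d₁ d₂ (ρ₁ ⊗ₖ ρ₂) p₁ p₂ q₁ q₂ = wigner d₁ ρ₁ p₁ q₁ * wigner d₂ ρ₂ p₂ q₂ := by
  rw [wigner2, wigner, wigner, mul_mul_mul_comm, mul_inv]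
  refine congrArg (((d₁ : ℂ)⁻¹ * (d₂ : ℂ)⁻¹) * ·) ?_
  simp only [Finset.sum_mul, Finset.mul_sum, ← Matrix.mul_kronecker_mul, Matrix.trace_kronecker]
  rw [sum_comm_pairs]
  exact Fintype.sum_congr _ _ fun _ => Fintype.sum_congr _ _ fun _ =>
    Fintype.sum_congr _ _ fun _ => Fintype.sum_congr _ _ fun _ => by ring

lemma wignerNorm2_kronecker (ρ₁ : Matrix (ZMod d₁) (ZMod d₁) ℂ)
    (ρ₂ : Matrix (ZMod d₂) (ZMod d₂) ℂ) :
    wignerNorm2 d₁ d₂ (ρ₁ ⊗ₖ ρ₂) = wignerNorm d₁ ρ₁ * wignerNorm d₂ ρ₂ := by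
  simp only [wignerNorm2, wignerNorm, Finset.sum_mul_sum, wigner2_kronecker, norm_mul]

end CompositePhaseSpace

theorem wigner_kronecker_factorizes_general (d₁ d₂ : ℕ) [NeZero d₁] [NeZero d₂]
    (ρ₁ : Matrix (ZMod d₁) (ZMod d₁) ℂ) (ρ₂ : Matrix (ZMod d₂) (ZMod d₂) ℂ)
    (hρ₁ : IsDensityMatrix d₁ ρ₁) (hρ₂ : IsDensityMatrix d₂ ρ₂) :
    (∀ (p₁ q₁ : ZMod d₁) (p₂ q₂ : ZMod d₂),
        wigner2 d₁ d₂ (ρ₁ ⊗ₖ ρ₂) p₁ p₂ q₁ q₂ = wigner d₁ ρ₁ p₁ q₁ * wigner d₂ ρ₂ p₂ q₂) ∧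
      wignerNorm2 d₁ d₂ (ρ₁ ⊗ₖ ρ₂) = wignerNorm d₁ ρ₁ * wignerNorm d₂ ρ₂ ∧
      Real.log (wignerNorm2 d₁ d₂ (ρ₁ ⊗ₖ ρ₂)) =
        Real.log (wignerNorm d₁ ρ₁) + Real.log (wignerNorm d₂ ρ₂) := by
  have hpos₁ := wignerNorm_pos (hρ₁.2 ▸ one_ne_zero)
  have hpos₂ := wignerNorm_pos (hρ₂.2 ▸ one_ne_zero)
  refine ⟨wigner2_kronecker ρ₁ ρ₂, wignerNorm2_kronecker ρ₁ ρ₂, ?_⟩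
  rw [wignerNorm2_kronecker, Real.log_mul hpos₁.ne' hpos₂.ne']

/-- the Wigner function factorizes over tensor products; consequently the
Wigner norm is multiplicative and the mana is additive. -/
theorem wigner_kronecker_factorizes (d₁ d₂ : ℕ) [NeZero d₁] [NeZero d₂]
    (hodd₁ : Odd d₁) (hd₁ : 3 ≤ d₁) (hodd₂ : Odd d₂) (hd₂ : 3 ≤ d₂)
    (ρ₁ : Matrix (ZMod d₁) (ZMod d₁) ℂ) (ρ₂ : Matrix (ZMod d₂) (ZMod d₂) ℂ)
    (hρ₁ : IsDensityMatrix d₁ ρ₁) (hρ₂ : IsDensityMatrix d₂ ρ₂) :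
    (∀ (p₁ q₁ : ZMod d₁) (p₂ q₂ : ZMod d₂),
        wigner2 d₁ d₂ (ρ₁ ⊗ₖ ρ₂) p₁ p₂ q₁ q₂ = wigner d₁ ρ₁ p₁ q₁ * wigner d₂ ρ₂ p₂ q₂) ∧
      wignerNorm2 d₁ d₂ (ρ₁ ⊗ₖ ρ₂) = wignerNorm d₁ ρ₁ * wignerNorm d₂ ρ₂ ∧
      Real.log (wignerNorm2 d₁ d₂ (ρ₁ ⊗ₖ ρ₂)) =
        Real.log (wignerNorm d₁ ρ₁) + Real.log (wignerNorm d₂ ρ₂) :=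
  wigner_kronecker_factorizes_general d₁ d₂ ρ₁ ρ₂ hρ₁ hρ₂
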